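/- arXiv:1204.5528 — 2 statements merged into one kernel-verified Lean document; each statement's English description precedes it below -/
import Mathlib

section
/- Let a > b ≥ 1 be integers, U ⊆ ℂⁿ open, f : U → ℂ holomorphic, φ_{a,b}(w) = (w₁^a conj(w₁)^b, …, wₙ^a conj(wₙ)^b), and g = f ∘ φ_{a,b}. For w with φ_{a,b}(w) ∈ U and indices 1 ≤ j < k ≤ n, define C_{j,k}(w) = |conj(w_j)·g_{w_k}(w) − conj(w_k)·g_{w_j}(w)|² − |w_j·g_{w̄_k}(w) − w_k·g_{w̄_j}(w)|². Then C_{j,k}(w) = (a² − b²)·|w_j w_k|²·| w_k^{a−1} conj(w_k)^{b−1} (∂f/∂z_k)(φ_{a,b}(w)) − w_j^{a−1} conj(w_j)^{b−1} (∂f/∂z_j)(φ_{a,b}(w)) |². In particular C_{j,k}(w) ≥ 0 for all j, k and all such w, so g is holomorphic-like. -/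
open Complex ComplexConjugate

/-- The Wirtinger derivative `∂g/∂w_j` of a real-differentiable map `g : ℂⁿ → ℂ`. -/
noncomputable def wdz {n : ℕ} (g : (Fin n → ℂ) → ℂ) (z : Fin n → ℂ) (j : Fin n) : ℂ :=
  (1 / 2 : ℂ) * (fderiv ℝ g z (Pi.single j 1) - Complex.I * fderiv ℝ g z (Pi.single j Complex.I))

/-- The Wirtinger derivative `∂g/∂w̄_j` of a real-differentiable map `g : ℂⁿ → ℂ`. -/
noncomputable def wdzbar {n : ℕ} (g : (Fin n → ℂ) → ℂ) (z : Fin n → ℂ) (j : Fin n) : ℂ :=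
  (1 / 2 : ℂ) * (fderiv ℝ g z (Pi.single j 1) + Complex.I * fderiv ℝ g z (Pi.single j Complex.I))

/-- The homogeneous mixed covering `φ_{a,b}(w) = (w₁^a conj(w₁)^b, …, wₙ^a conj(wₙ)^b)`. -/
noncomputable def phiab {n : ℕ} (a b : ℕ) (w : Fin n → ℂ) : Fin n → ℂ :=
  fun j => w j ^ a * conj (w j) ^ b

/-- The quantity `C_{j,k}` of a real-differentiable mixed function `g`. -/
noncomputable def Cjk {n : ℕ} (g : (Fin n → ℂ) → ℂ) (w : Fin n → ℂ) (j k : Fin n) : ℝ :=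
  (‖conj (w j) * wdz g w k - conj (w k) * wdz g w j‖) ^ 2
    - (‖w j * wdzbar g w k - w k * wdzbar g w j‖) ^ 2


/- The ℝ-differential of `φ_{a,b}` is diagonal, its `j`-th block being `v ↦ α_j v + β_j v̄` with
`α_j = a w_j^{a-1} w̄_j^b` and `β_j = b w_j^a w̄_j^{b-1}`. By the chain rule the Wirtinger derivatives
of `g = f ∘ φ_{a,b}` are `g_{w_j} = α_j f_{z_j}` and `g_{w̄_j} = β_j f_{z_j}`. Writing
`e_j = w_j^{a-1} w̄_j^{b-1} f_{z_j}`, this is `g_{w_j} = a w̄_j e_j` and `g_{w̄_j} = b w_j e_j`, so both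
terms of `C_{j,k}` are multiples of `|w_j w_k|² |e_k - e_j|²`, with factors `a²` and `b²`. -/

lemma hasFDerivAt_pow_mul_conj_pow (a b : ℕ) (z : ℂ) :
    HasFDerivAt (fun z : ℂ => z ^ a * conj z ^ b)
      (((a : ℂ) * z ^ (a - 1) * conj z ^ b) • ContinuousLinearMap.id ℝ ℂ
        + ((b : ℂ) * z ^ a * conj z ^ (b - 1)) • (conjCLE : ℂ →L[ℝ] ℂ)) z := by
  have hza := (hasDerivAt_pow a z).hasFDerivAt.restrictScalars ℝ
  have hzb := ((hasDerivAt_pow b (conj z)).hasFDerivAt.restrictScalars ℝ).comp z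
    conjCLE.hasFDerivAt
  refine (hza.mul hzb).congr_fderiv ?_
  ext v
  simp
  ring

lemma fderiv_comp_coordwise_single {n : ℕ} (ψ : ℂ → ℂ) (ψ' : ℂ → ℂ →L[ℝ] ℂ)
    (hψ : ∀ z, HasFDerivAt ψ (ψ' z) z) (f : (Fin n → ℂ) → ℂ) (w : Fin n → ℂ)
    (hf : DifferentiableAt ℂ f (fun i => ψ (w i))) (j : Fin n) (v : ℂ) :
    fderiv ℝ (fun w => f (fun i => ψ (w i))) w (Pi.single j v)
      = ψ' (w j) v * fderiv ℂ f (fun i => ψ (w i)) (Pi.single j 1) := by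
  have hcoord : HasFDerivAt (fun w : Fin n → ℂ => fun i => ψ (w i))
      (ContinuousLinearMap.pi fun i => (ψ' (w i)).comp (ContinuousLinearMap.proj i)) w :=
    hasFDerivAt_pi.2 fun i => (hψ (w i)).comp w (hasFDerivAt_apply i w)
  have hsingle : (ContinuousLinearMap.pi fun i => (ψ' (w i)).comp (ContinuousLinearMap.proj i))
      (Pi.single j v) = ψ' (w j) v • (Pi.single j 1 : Fin n → ℂ) := by
    ext i
    rcases eq_or_ne i j with rfl | h
    · simp
    · simp [h]
  have hcomp : HasFDerivAt (fun w => f (fun i => ψ (w i)))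
      (((fderiv ℂ f (fun i => ψ (w i))).restrictScalars ℝ).comp
        (ContinuousLinearMap.pi fun i => (ψ' (w i)).comp (ContinuousLinearMap.proj i))) w :=
    (hf.hasFDerivAt.restrictScalars ℝ).comp w hcoord
  rw [hcomp.fderiv, ContinuousLinearMap.comp_apply, hsingle,
    ContinuousLinearMap.coe_restrictScalars', map_smul, smul_eq_mul]

section Wirtinger

variable {n : ℕ} {g : (Fin n → ℂ) → ℂ} {w : Fin n → ℂ} {j : Fin n} {α β c : ℂ}

lemma wdz_eq_of_fderiv_single
    (hg : ∀ v, fderiv ℝ g w (Pi.single j v) = (α * v + β * conj v) * c) :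
    wdz g w j = α * c := by
  rw [wdz, hg, hg]
  simp only [map_one, conj_I]
  linear_combination (1 / 2 : ℂ) * (β - α) * c * I_mul_I

lemma wdzbar_eq_of_fderiv_single
    (hg : ∀ v, fderiv ℝ g w (Pi.single j v) = (α * v + β * conj v) * c) :
    wdzbar g w j = β * c := by
  rw [wdzbar, hg, hg]
  simp only [map_one, conj_I]
  linear_combination (1 / 2 : ℂ) * (α - β) * c * I_mul_I

end Wirtinger

lemma Cjk_eq_of_wirtinger {n : ℕ} (g : (Fin n → ℂ) → ℂ) (w e : Fin n → ℂ) (α β : ℂ)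
    (hz : ∀ i, wdz g w i = α * conj (w i) * e i)
    (hzbar : ∀ i, wdzbar g w i = β * w i * e i) (j k : Fin n) :
    Cjk g w j k = (‖α‖ ^ 2 - ‖β‖ ^ 2) * ‖w j * w k‖ ^ 2 * ‖e k - e j‖ ^ 2 := by
  have hz' : conj (w j) * wdz g w k - conj (w k) * wdz g w j
      = α * conj (w j * w k) * (e k - e j) := by
    rw [hz, hz, map_mul]; ring
  have hzbar' : w j * wdzbar g w k - w k * wdzbar g w j = β * (w j * w k) * (e k - e j) := by
    rw [hzbar, hzbar]; ring
  rw [Cjk, hz', hzbar']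
  simp only [norm_mul, norm_conj]
  ring

lemma wirtinger_comp_phiab {n : ℕ} (a b : ℕ) (f : (Fin n → ℂ) → ℂ) (w : Fin n → ℂ)
    (hf : DifferentiableAt ℂ f (phiab a b w)) (j : Fin n) :
    wdz (fun w => f (phiab a b w)) w j
        = a * w j ^ (a - 1) * conj (w j) ^ b * fderiv ℂ f (phiab a b w) (Pi.single j 1) ∧
      wdzbar (fun w => f (phiab a b w)) w j
        = b * w j ^ a * conj (w j) ^ (b - 1) * fderiv ℂ f (phiab a b w) (Pi.single j 1) := by
  have hg : ∀ v, fderiv ℝ (fun w => f (phiab a b w)) w (Pi.single j v)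
      = (a * w j ^ (a - 1) * conj (w j) ^ b * v + b * w j ^ a * conj (w j) ^ (b - 1) * conj v)
        * fderiv ℂ f (phiab a b w) (Pi.single j 1) := fun v => by
    refine (fderiv_comp_coordwise_single _ _ (hasFDerivAt_pow_mul_conj_pow a b) f w hf j v).trans
      ?_
    simp only [add_apply, smul_apply, ContinuousLinearMap.id_apply,
      ContinuousLinearEquiv.coe_coe, conjCLE_apply, smul_eq_mul]
    rfl
  exact ⟨wdz_eq_of_fderiv_single hg, wdzbar_eq_of_fderiv_single hg⟩

theorem mixed_pullback_holomorphic_like_general (n : ℕ) (a b : ℕ) (hb : 1 ≤ b) (hab : b < a)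
    (U : Set (Fin n → ℂ))
    (f : (Fin n → ℂ) → ℂ) (hf : ∀ z ∈ U, DifferentiableAt ℂ f z)
    (w : Fin n → ℂ) (hw : phiab a b w ∈ U) :
    ∀ j k : Fin n,
      Cjk (fun w => f (phiab a b w)) w j k
        = ((a : ℝ) ^ 2 - (b : ℝ) ^ 2) * (‖w j * w k‖) ^ 2 *
          (‖
            (w k ^ (a - 1) * conj (w k) ^ (b - 1) * fderiv ℂ f (phiab a b w) (Pi.single k 1)
              - w j ^ (a - 1) * conj (w j) ^ (b - 1) *
                fderiv ℂ f (phiab a b w) (Pi.single j 1))‖) ^ 2 ∧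
      0 ≤ Cjk (fun w => f (phiab a b w)) w j k := by
  intro j k
  set e : Fin n → ℂ := fun i =>
    w i ^ (a - 1) * conj (w i) ^ (b - 1) * fderiv ℂ f (phiab a b w) (Pi.single i 1)
  have hwirt := wirtinger_comp_phiab a b f w (hf _ hw)
  have hC := Cjk_eq_of_wirtinger _ w e a b
    (fun i => by rw [(hwirt i).1, ← pow_sub_one_mul (by omega : b ≠ 0) (conj (w i))]; ring)
    (fun i => by rw [(hwirt i).2, ← pow_sub_one_mul (by omega : a ≠ 0) (w i)]; ring) j k
  rw [norm_natCast, norm_natCast] at hC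
  have hba : 0 ≤ (a : ℝ) ^ 2 - (b : ℝ) ^ 2 := sub_nonneg.2 (by gcongr)
  exact ⟨hC, hC ▸ by positivity⟩

/-- For the pull-back `g = f ∘ φ_{a,b}` of a holomorphic function (`a > b ≥ 1`),
`C_{j,k}(w) = (a²−b²)|w_j w_k|²·|w_k^{a−1} conj(w_k)^{b−1} f_{z_k}(φ(w)) −
w_j^{a−1} conj(w_j)^{b−1} f_{z_j}(φ(w))|² ≥ 0`; hence `g` is holomorphic-like. -/
theorem mixed_pullback_holomorphic_like (n : ℕ) (a b : ℕ) (hb : 1 ≤ b) (hab : b < a)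
    (U : Set (Fin n → ℂ)) (hU : IsOpen U)
    (f : (Fin n → ℂ) → ℂ) (hf : ∀ z ∈ U, DifferentiableAt ℂ f z)
    (w : Fin n → ℂ) (hw : phiab a b w ∈ U) :
    ∀ j k : Fin n,
      Cjk (fun w => f (phiab a b w)) w j k
        = ((a : ℝ) ^ 2 - (b : ℝ) ^ 2) * (‖w j * w k‖) ^ 2 *
          (‖
            (w k ^ (a - 1) * conj (w k) ^ (b - 1) * fderiv ℂ f (phiab a b w) (Pi.single k 1)
              - w j ^ (a - 1) * conj (w j) ^ (b - 1) *
                fderiv ℂ f (phiab a b w) (Pi.single j 1))‖) ^ 2 ∧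
      0 ≤ Cjk (fun w => f (phiab a b w)) w j k :=
  mixed_pullback_holomorphic_like_general n a b hb hab U f hf w hw
end

section
/- Let g : ℂⁿ → ℂ be real-differentiable and strongly polar weighted homogeneous: there are positive integers p₁,…,pₙ and integers m_r, m_p with m_p > 0 such that g(r^{p₁}z₁,…,r^{pₙ}zₙ) = r^{m_r} g(z) for all r > 0 and g(e^{ip₁η}z₁,…,e^{ipₙη}zₙ) = e^{i m_p η} g(z) for all η ∈ ℝ. Suppose w ∈ ℂⁿ \ {0} with g(w) ≠ 0 and λ ∈ ℂ satisfies λ·w_j = conj(g_{w_j}(w))/conj(g(w)) − g_{w̄_j}(w)/g(w) for all j = 1,…,n (i.e. ∇θ(w) = λ·w for the argument θ of g). Then λ is a real number, λ·Σ_j p_j|w_j|² = m_p, and in particular λ > 0. -/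
/-!
Differentiating the two homogeneity relations at `r = 1` and `η = 0` gives the Euler identities
`A + B = m_r g(w)` and `A - B = m_p g(w)`, where `A = Σ p_j g_{w_j} w_j` and
`B = Σ p_j g_{w̄_j} w̄_j`. Multiplying the `j`-th equation `λ w_j = …` by `p_j w̄_j` and summing
gives `λ Σ p_j |w_j|² = conj A / conj g(w) - B / g(w) = (m_r + m_p)/2 - (m_r - m_p)/2 = m_p`,
so `λ = m_p / Σ p_j |w_j|²` is a positive real number.
-/

open Complex ComplexConjugate

section WeightedHomogeneous

variable {n : ℕ}

def IsRadialWeightedHomogeneous (g : (Fin n → ℂ) → ℂ) (p : Fin n → ℕ) (mr : ℤ) : Prop :=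
  ∀ r : ℝ, 0 < r → ∀ z : Fin n → ℂ,
    g (fun j => ((r ^ (p j) : ℝ) : ℂ) * z j) = ((r ^ mr : ℝ) : ℂ) * g z

def IsPolarWeightedHomogeneous (g : (Fin n → ℂ) → ℂ) (p : Fin n → ℕ) (mp : ℤ) : Prop :=
  ∀ (η : ℝ) (z : Fin n → ℂ),
    g (fun j => Complex.exp (Complex.I * (p j : ℂ) * (η : ℂ)) * z j)
      = Complex.exp (Complex.I * (mp : ℂ) * (η : ℂ)) * g z

lemma real_mul_add_real_mul_eq_wirtinger (a b z : ℂ) :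
    (z.re : ℂ) * a + (z.im : ℂ) * b
      = (1 / 2) * (a - I * b) * z + (1 / 2) * (a + I * b) * conj z := by
  apply Complex.ext <;> simp [Complex.mul_re, Complex.mul_im] <;> ring

lemma fderiv_apply_eq_sum_wirtinger (g : (Fin n → ℂ) → ℂ) (w v : Fin n → ℂ) :
    fderiv ℝ g w v = ∑ j, (wdz g w j * v j + wdzbar g w j * conj (v j)) := by
  have hv : v = ∑ j, ((v j).re • (Pi.single j (1 : ℂ) : Fin n → ℂ)
      + (v j).im • (Pi.single j I : Fin n → ℂ)) := by
    funext k
    simp only [Finset.sum_apply, Pi.add_apply, Pi.smul_apply]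
    rw [Finset.sum_eq_single k (fun j _ hj => by simp [Pi.single_eq_of_ne' hj]) (by simp)]
    simp [real_smul, Complex.re_add_im]
  conv_lhs => rw [hv]
  simp only [map_sum, map_add, map_smul, real_smul]
  exact Finset.sum_congr rfl fun j _ => real_mul_add_real_mul_eq_wirtinger _ _ _

lemma IsRadialWeightedHomogeneous.fderiv_apply_weighted {g : (Fin n → ℂ) → ℂ} {p : Fin n → ℕ}
    {mr : ℤ} (hrad : IsRadialWeightedHomogeneous g p mr) {w : Fin n → ℂ}
    (hg : DifferentiableAt ℝ g w) :
    fderiv ℝ g w (fun j => (p j : ℂ) * w j) = mr * g w := by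
  set ψ : ℝ → (Fin n → ℂ) := fun r j => ((r ^ (p j) : ℝ) : ℂ) * w j
  have hψ1 : ψ 1 = w := by funext j; simp [ψ]
  have hψ : HasDerivAt ψ (fun j => (p j : ℂ) * w j) 1 := by
    refine hasDerivAt_pi.2 fun j => ?_
    have hpow : HasDerivAt (fun r : ℝ => r ^ (p j)) (p j : ℝ) 1 := by
      simpa using hasDerivAt_pow (p j) (1 : ℝ)
    simpa [ψ] using hpow.ofReal_comp.mul_const (w j)
  have hzpow : HasDerivAt (fun r : ℝ => ((r ^ mr : ℝ) : ℂ) * g w) (mr * g w) 1 := by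
    have h := hasDerivAt_zpow mr (1 : ℝ) (Or.inl one_ne_zero)
    simpa using h.ofReal_comp.mul_const (g w)
  have hcomp : g ∘ ψ =ᶠ[nhds 1] fun r : ℝ => ((r ^ mr : ℝ) : ℂ) * g w := by
    filter_upwards [Ioi_mem_nhds zero_lt_one] with r hr
    exact hrad r hr w
  have hF : HasFDerivAt g (fderiv ℝ g w) (ψ 1) := hψ1 ▸ hg.hasFDerivAt
  exact (hF.comp_hasDerivAt 1 hψ).unique (hzpow.congr_of_eventuallyEq hcomp)

lemma IsPolarWeightedHomogeneous.fderiv_apply_weighted {g : (Fin n → ℂ) → ℂ} {p : Fin n → ℕ}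
    {mp : ℤ} (hpol : IsPolarWeightedHomogeneous g p mp) {w : Fin n → ℂ}
    (hg : DifferentiableAt ℝ g w) :
    fderiv ℝ g w (fun j => I * (p j : ℂ) * w j) = I * mp * g w := by
  have hexp : ∀ (c u : ℂ),
      HasDerivAt (fun η : ℝ => Complex.exp (I * c * η) * u) (I * c * u) 0 := fun c u => by
    have hlin : HasDerivAt (fun z : ℂ => I * c * z) (I * c) 0 := by
      simpa using (hasDerivAt_id (0 : ℂ)).const_mul (I * c)
    simpa using (hlin.cexp.mul_const u).comp_ofReal (z := 0)
  set φ : ℝ → (Fin n → ℂ) := fun η j => Complex.exp (I * (p j : ℂ) * η) * w j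
  have hφ0 : φ 0 = w := by funext j; simp [φ]
  have hφ : HasDerivAt φ (fun j => I * (p j : ℂ) * w j) 0 :=
    hasDerivAt_pi.2 fun j => hexp (p j) (w j)
  have hcomp : g ∘ φ = fun η : ℝ => Complex.exp (I * mp * η) * g w := funext fun η => hpol η w
  have hF : HasFDerivAt g (fderiv ℝ g w) (φ 0) := hφ0 ▸ hg.hasFDerivAt
  have h := hF.comp_hasDerivAt 0 hφ
  rw [hcomp] at h
  exact h.unique (hexp mp (g w))

end WeightedHomogeneous

section Gradient

variable {n : ℕ} (g : (Fin n → ℂ) → ℂ) (p : Fin n → ℕ) (w : Fin n → ℂ)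

lemma fderiv_apply_weighted_eq :
    fderiv ℝ g w (fun j => (p j : ℂ) * w j)
      = ∑ j, (p j : ℂ) * (wdz g w j * w j) + ∑ j, (p j : ℂ) * (wdzbar g w j * conj (w j)) := by
  rw [fderiv_apply_eq_sum_wirtinger, ← Finset.sum_add_distrib]
  refine Finset.sum_congr rfl fun j _ => ?_
  simp only [map_mul, Complex.conj_natCast]
  ring

lemma fderiv_apply_I_weighted_eq :
    fderiv ℝ g w (fun j => I * (p j : ℂ) * w j)
      = I * (∑ j, (p j : ℂ) * (wdz g w j * w j)
          - ∑ j, (p j : ℂ) * (wdzbar g w j * conj (w j))) := by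
  rw [fderiv_apply_eq_sum_wirtinger, mul_sub, Finset.mul_sum, Finset.mul_sum,
    ← Finset.sum_sub_distrib]
  refine Finset.sum_congr rfl fun j _ => ?_
  simp only [map_mul, Complex.conj_I, Complex.conj_natCast]
  ring

lemma mul_sum_weighted_normSq_eq {lam : ℂ}
    (hlam : ∀ j, lam * w j = conj (wdz g w j) / conj (g w) - wdzbar g w j / g w) :
    lam * ∑ j, (p j : ℂ) * ((Complex.normSq (w j) : ℝ) : ℂ)
      = conj (∑ j, (p j : ℂ) * (wdz g w j * w j)) / conj (g w)
        - (∑ j, (p j : ℂ) * (wdzbar g w j * conj (w j))) / g w := by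
  rw [Finset.mul_sum, map_sum, Finset.sum_div, Finset.sum_div, ← Finset.sum_sub_distrib]
  refine Finset.sum_congr rfl fun j _ => ?_
  calc lam * ((p j : ℂ) * ((Complex.normSq (w j) : ℝ) : ℂ))
      = (p j : ℂ) * conj (w j) * (lam * w j) := by rw [← Complex.mul_conj]; ring
    _ = _ := by
      rw [hlam j]
      simp only [map_mul, Complex.conj_natCast]
      ring

end Gradient

lemma sum_weighted_normSq_pos {n : ℕ} {p : Fin n → ℕ} (hp : ∀ j, 0 < p j) {w : Fin n → ℂ}
    (hw : w ≠ 0) : 0 < ∑ j, (p j : ℝ) * Complex.normSq (w j) := by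
  obtain ⟨j, hj⟩ := Function.ne_iff.1 hw
  refine Finset.sum_pos' (fun k _ => mul_nonneg (Nat.cast_nonneg _) (normSq_nonneg _))
    ⟨j, Finset.mem_univ j, ?_⟩
  exact mul_pos (by exact_mod_cast hp j) (Complex.normSq_pos.2 hj)

/-- For a strongly polar weighted homogeneous mixed function `g` with positive polar
degree `m_p`, if `∇θ(w) = λ·w` at a point `w ≠ 0` with `g(w) ≠ 0` (i.e.
`λ w_j = conj(g_{w_j})/conj(g) − g_{w̄_j}/g` for all `j`), then `λ` is real,
`λ Σ_j p_j |w_j|² = m_p`, and in particular `λ > 0`. -/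
theorem gradient_argument_proportional_implies_positive (n : ℕ)
    (g : (Fin n → ℂ) → ℂ) (hg : Differentiable ℝ g)
    (p : Fin n → ℕ) (hp : ∀ j, 0 < p j) (mr mp : ℤ) (hmp : 0 < mp)
    (hrad : ∀ r : ℝ, 0 < r → ∀ z : Fin n → ℂ,
      g (fun j => ((r ^ (p j) : ℝ) : ℂ) * z j) = ((r ^ mr : ℝ) : ℂ) * g z)
    (hpol : ∀ (η : ℝ) (z : Fin n → ℂ),
      g (fun j => Complex.exp (Complex.I * (p j : ℂ) * (η : ℂ)) * z j)
        = Complex.exp (Complex.I * (mp : ℂ) * (η : ℂ)) * g z)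
    (w : Fin n → ℂ) (hw : w ≠ 0) (hgw : g w ≠ 0) (lam : ℂ)
    (hlam : ∀ j, lam * w j = conj (wdz g w j) / conj (g w) - wdzbar g w j / g w) :
    lam.im = 0 ∧
    lam * ∑ j, (p j : ℂ) * ((Complex.normSq (w j) : ℝ) : ℂ) = (mp : ℂ) ∧
    0 < lam.re := by
  set A := ∑ j, (p j : ℂ) * (wdz g w j * w j) with hA_def
  set B := ∑ j, (p j : ℂ) * (wdzbar g w j * conj (w j)) with hB_def
  have hradial : A + B = mr * g w := by
    rw [← fderiv_apply_weighted_eq, IsRadialWeightedHomogeneous.fderiv_apply_weighted hrad (hg w)]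
  have hpolar : A - B = mp * g w := by
    refine mul_left_cancel₀ I_ne_zero ?_
    rw [← fderiv_apply_I_weighted_eq, IsPolarWeightedHomogeneous.fderiv_apply_weighted hpol (hg w),
      mul_assoc]
  have hA : A = (mr + mp) / 2 * g w := by linear_combination (hradial + hpolar) / 2
  have hB : B = (mr - mp) / 2 * g w := by linear_combination (hradial - hpolar) / 2
  have hlamS : lam * ∑ j, (p j : ℂ) * ((Complex.normSq (w j) : ℝ) : ℂ) = mp := by
    rw [mul_sum_weighted_normSq_eq g p w hlam, ← hA_def, ← hB_def, hA, hB, map_mul,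
      mul_div_cancel_right₀ _ ((map_ne_zero _).2 hgw), mul_div_cancel_right₀ _ hgw]
    simp only [map_div₀, map_add, map_intCast, map_ofNat]
    ring
  set T := ∑ j, (p j : ℝ) * Complex.normSq (w j)
  have hT : 0 < T := sum_weighted_normSq_pos hp hw
  have hlam_eq : lam = ((mp / T : ℝ) : ℂ) := by
    rw [Complex.ofReal_div, eq_div_iff (by exact_mod_cast hT.ne'), Complex.ofReal_intCast, ← hlamS]
    push_cast [T]
    rfl
  refine ⟨by rw [hlam_eq]; simp, hlamS, ?_⟩
  rw [hlam_eq, Complex.ofReal_re]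
  exact div_pos (by exact_mod_cast hmp) hT
end
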